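/- Let M be a left S-semimodule such that every subtractive subsemimodule of M is a direct summand of M. Then every left S-semimodule P is M-e-projective. -/

import Mathlib

/-! The kernel `K` of a normal epimorphism `f : M → N` is subtractive, hence a direct summand
`M = K ⊕ L`. Normality makes `f` injective on `L`, so `f|_L : L ≃ N` and `h := (f|_L)⁻¹ ∘ g` lifts
`g`. Any other lift `h'` splits as `h' = π_K ∘ h' + π_L ∘ h'`, and `π_L ∘ h' = h` because both are
lifts of `g` into `L`; thus `h + π_K ∘ h' = h'` with `f ∘ π_K ∘ h' = 0`. -/

universe u

/-- `f` is `k`-normal. -/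
def KNormal {S L M : Type*} [Semiring S] [AddCommMonoid L] [AddCommMonoid M]
    [Module S L] [Module S M] (f : L →ₗ[S] M) : Prop :=
  ∀ l₁ l₂ : L, f l₁ = f l₂ → ∃ k₁ k₂ : L, f k₁ = 0 ∧ f k₂ = 0 ∧ l₁ + k₁ = l₂ + k₂

/-- `P` is `M`-`e`-projective: for every normal epimorphism `f : M → N` and any
`g : P → N` there is a lift `h` with `f ∘ h = g`, and any other lift `h'`
differs from `h` by kernel maps. -/
def MEProjective (S : Type u) [Semiring S] (P : Type u) [AddCommMonoid P]
    [Module S P] (M : Type u) [AddCommMonoid M] [Module S M] : Prop :=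
  ∀ (N : Type u) (_ : AddCommMonoid N) (_ : Module S N)
    (f : M →ₗ[S] N), Function.Surjective f → KNormal f →
    ∀ g : P →ₗ[S] N, ∃ h : P →ₗ[S] M, f.comp h = g ∧
      ∀ h' : P →ₗ[S] M, f.comp h' = g →
        ∃ h₁ h₂ : P →ₗ[S] M, f.comp h₁ = 0 ∧ f.comp h₂ = 0 ∧ h + h₁ = h' + h₂

open Function LinearMap

section

variable {S M N : Type*} [Semiring S] [AddCommMonoid M] [Module S M]
  [AddCommMonoid N] [Module S N]

namespace Submodule

def IsSubtractive (K : Submodule S M) : Prop :=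
  ∀ (m k k' : M), k ∈ K → k' ∈ K → m + k = k' → m ∈ K

theorem bijective_coprod_subtype_iff {K L : Submodule S M} :
    Bijective (K.subtype.coprod L.subtype) ↔
      ∀ m : M, ∃! p : K × L, (p.1 : M) + (p.2 : M) = m :=
  bijective_iff_existsUnique _

end Submodule

namespace LinearMap

theorem isSubtractive_ker (f : M →ₗ[S] N) : (ker f).IsSubtractive := by
  intro m k k' hk hk' h
  have hf := congrArg f h
  rw [mem_ker] at hk hk' ⊢
  rwa [map_add, hk, hk', add_zero] at hf

variable {f : M →ₗ[S] N} {L : Submodule S M}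

theorem bijective_comp_subtype_of_bijective_coprod (hf : Surjective f) (hnorm : KNormal f)
    (hdecomp : Bijective ((ker f).subtype.coprod L.subtype)) : Bijective (f.comp L.subtype) := by
  refine ⟨fun l₁ l₂ hl => ?_, fun n => ?_⟩
  · obtain ⟨k₁, k₂, hk₁, hk₂, hsum⟩ := hnorm _ _ hl
    have hpair : ((⟨k₁, hk₁⟩ : ker f), l₁) = (⟨k₂, hk₂⟩, l₂) :=
      hdecomp.1 (by simpa [add_comm] using hsum)
    exact congrArg Prod.snd hpair
  · obtain ⟨m, rfl⟩ := hf n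
    obtain ⟨⟨k, l⟩, rfl⟩ := hdecomp.2 m
    refine ⟨l, ?_⟩
    simp [mem_ker.mp k.2]

theorem exists_lift_add_ker_eq {P : Type*} [AddCommMonoid P] [Module S P]
    (hdecomp : Bijective ((ker f).subtype.coprod L.subtype)) (hbij : Bijective (f.comp L.subtype))
    (g : P →ₗ[S] N) :
    ∃ h : P →ₗ[S] M, f.comp h = g ∧
      ∀ h' : P →ₗ[S] M, f.comp h' = g → ∃ k : P →ₗ[S] M, f.comp k = 0 ∧ h + k = h' := by
  let e := LinearEquiv.ofBijective _ hbij
  let D := LinearEquiv.ofBijective _ hdecomp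
  refine ⟨L.subtype ∘ₗ e.symm.toLinearMap ∘ₗ g, ?_, fun h' hh' => ?_⟩
  · ext p
    exact e.apply_symm_apply (g p)
  refine ⟨(ker f).subtype ∘ₗ fst S _ _ ∘ₗ D.symm.toLinearMap ∘ₗ h', ?_, ?_⟩
  · ext p
    exact mem_ker.mp (D.symm (h' p)).1.2
  · ext p
    set q := D.symm (h' p)
    have hsplit : (q.1 : M) + q.2 = h' p := D.apply_symm_apply (h' p)
    have hlift : e q.2 = g p := calc
      e q.2 = f (q.1 + q.2) := by rw [map_add, mem_ker.mp q.1.2, zero_add]; rfl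
      _ = g p := by rw [hsplit]; exact LinearMap.congr_fun hh' p
    simp only [add_apply, comp_apply, LinearEquiv.coe_coe,
      Submodule.coe_subtype, fst_apply, ← hlift, e.symm_apply_apply]
    rw [add_comm, hsplit]

end LinearMap

end

/-- If every subtractive subsemimodule of `M` is a direct summand of `M`, then
every left `S`-semimodule is `M`-`e`-projective. -/
theorem meProjective_of_subtractive_summands
    (S : Type u) [Semiring S] (M : Type u) [AddCommMonoid M] [Module S M]
    (hM : ∀ K : Submodule S M,
      (∀ (m : M) (k k' : M), k ∈ K → k' ∈ K → m + k = k' → m ∈ K) →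
      ∃ L : Submodule S M, ∀ m : M, ∃! p : K × L, (p.1 : M) + (p.2 : M) = m) :
    ∀ (P : Type u) (_ : AddCommMonoid P) (_ : Module S P),
      MEProjective S P M := by
  intro P _ _ N _ _ f hf hnorm g
  obtain ⟨L, hL⟩ := hM _ f.isSubtractive_ker
  have hdecomp := Submodule.bijective_coprod_subtype_iff.2 hL
  have hbij := bijective_comp_subtype_of_bijective_coprod hf hnorm hdecomp
  obtain ⟨h, hh, hunique⟩ := exists_lift_add_ker_eq hdecomp hbij g
  refine ⟨h, hh, fun h' hh' => ?_⟩
  obtain ⟨k, hk, rfl⟩ := hunique h' hh'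
  exact ⟨k, 0, hk, comp_zero f, (add_zero _).symm⟩
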